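/- arXiv:math/9404225 — 2 statements merged into one kernel-verified Lean document; each statement's English description precedes it below -/
import Mathlib

section
/- The monic polynomials P̂_n(x) := d^n q^{n(n-1)/2} ₂φ₁(q^{-n}, c/x; 0; q, -qx/d) (monic big q-Jacobi polynomials with a=b=0) satisfy the three-term recurrence x·P̂_n(x) = P̂_{n+1}(x) + q^n(c-d)·P̂_n(x) + q^{n-1}cd(1-q^n)·P̂_{n-1}(x) for all n ≥ 1, with P̂_0(x)=1 and x·P̂_0(x) = P̂_1(x) + (c-d)·P̂_0(x). -/
/-!
In the Newton basis `π_k(x) = (x - c)(x - cq) ⋯ (x - cq^{k-1})` the series becomes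
`P̂_n = ∑_k q^{C(n-k, 2)} d^{n-k} [n, k]_q π_k`, with `[n, k]_q` the Gaussian binomial
coefficient.
Since `x π_k = π_{k+1} + c q^k π_k`, the recurrence splits into two coefficient identities:
the part free of `c` is the `q`-Pascal rule `[n+1, k+1] = [n, k] + q^{k+1} [n, k+1]`, and the part
linear in `c` is the absorption identity `(1 - q^{n+1-k}) [n+1, k] = (1 - q^{n+1}) [n, k]`.
-/

/-- finite q-shifted factorial `(a;q)_k = ∏_{j=0}^{k-1} (1 - a q^j)` -/
noncomputable def qPoch (q a : ℝ) (k : ℕ) : ℝ := ∏ j ∈ Finset.range k, (1 - a * q ^ j)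

/-- The monic big q-Jacobi polynomial with `a = b = 0`, via its series representation:
`P̂_n(x) = d^n q^{n(n-1)/2} ₂φ₁(q^{-n}, c/x; 0; q, -qx/d)`. -/
noncomputable def PhatSeries (q c d : ℝ) (n : ℕ) (x : ℝ) : ℝ :=
  d ^ n * q ^ (n * (n - 1) / 2) *
    ∑ k ∈ Finset.range (n + 1),
      qPoch q (q ^ (-(n : ℤ))) k * qPoch q (c / x) k / qPoch q q k * (-(q * x / d)) ^ k

open Finset

lemma qPoch_zero (q a : ℝ) : qPoch q a 0 = 1 := prod_range_zero _

lemma qPoch_succ (q a : ℝ) (k : ℕ) : qPoch q a (k + 1) = qPoch q a k * (1 - a * q ^ k) :=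
  prod_range_succ _ _

lemma qPoch_self_pos {q : ℝ} (hq0 : 0 < q) (hq1 : q < 1) (k : ℕ) : 0 < qPoch q q k :=
  prod_pos fun j _ => by
    rw [← pow_succ']
    exact sub_pos.mpr (pow_lt_one₀ hq0.le hq1 j.succ_ne_zero)

noncomputable def gaussBinom (q : ℝ) : ℕ → ℕ → ℝ
  | _, 0 => 1
  | 0, _ + 1 => 0
  | n + 1, k + 1 => gaussBinom q n k + q ^ (k + 1) * gaussBinom q n (k + 1)

section gaussBinom

variable (q : ℝ)

@[simp] lemma gaussBinom_zero_right (n : ℕ) : gaussBinom q n 0 = 1 := by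
  cases n <;> rfl

lemma gaussBinom_succ_succ (n k : ℕ) :
    gaussBinom q (n + 1) (k + 1) = gaussBinom q n k + q ^ (k + 1) * gaussBinom q n (k + 1) :=
  rfl

lemma gaussBinom_eq_zero_of_lt : ∀ {n k : ℕ}, n < k → gaussBinom q n k = 0
  | 0, _ + 1, _ => rfl
  | n + 1, k + 1, h => by
    rw [gaussBinom_succ_succ, gaussBinom_eq_zero_of_lt (by omega),
      gaussBinom_eq_zero_of_lt (by omega), mul_zero, add_zero]

@[simp] lemma gaussBinom_self : ∀ n : ℕ, gaussBinom q n n = 1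
  | 0 => rfl
  | n + 1 => by
    rw [gaussBinom_succ_succ, gaussBinom_self n, gaussBinom_eq_zero_of_lt q n.lt_succ_self,
      mul_zero, add_zero]

lemma gaussBinom_mul_qPoch_mul_qPoch :
    ∀ {n k : ℕ}, k ≤ n → gaussBinom q n k * qPoch q q k * qPoch q q (n - k) = qPoch q q n
  | _, 0, _ => by simp [qPoch_zero]
  | n + 1, k + 1, hk => by
    rcases hk.eq_or_lt with hkn | hk
    · obtain rfl : k = n := by omega
      simp [qPoch_zero]
    obtain ⟨t, rfl⟩ : ∃ t, n = k + 1 + t := ⟨n - (k + 1), by omega⟩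
    have ih₁ := gaussBinom_mul_qPoch_mul_qPoch (n := k + 1 + t) (k := k) (by omega)
    have ih₂ := gaussBinom_mul_qPoch_mul_qPoch (n := k + 1 + t) (k := k + 1) (by omega)
    rw [show k + 1 + t - k = t + 1 by omega, qPoch_succ q q t] at ih₁
    rw [show k + 1 + t - (k + 1) = t by omega] at ih₂
    rw [show k + 1 + t + 1 - (k + 1) = t + 1 by omega, gaussBinom_succ_succ, qPoch_succ q q t,
      qPoch_succ q q (k + 1 + t)]
    linear_combination (1 - q * q ^ k) * ih₁ + q ^ (k + 1) * (1 - q * q ^ t) * ih₂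
      + gaussBinom q (k + 1 + t) k * qPoch q q t * (1 - q * q ^ t) * qPoch_succ q q k

variable {q}

lemma gaussBinom_succ_right_mul (hq0 : 0 < q) (hq1 : q < 1) (n k : ℕ) :
    gaussBinom q n (k + 1) * (1 - q ^ (k + 1)) = gaussBinom q n k * (1 - q ^ (n - k)) := by
  rcases lt_or_ge k n with hk | hk
  · obtain ⟨t, rfl⟩ : ∃ t, n = k + 1 + t := ⟨n - (k + 1), by omega⟩
    have h₁ := gaussBinom_mul_qPoch_mul_qPoch q (n := k + 1 + t) (k := k) (by omega)
    have h₂ := gaussBinom_mul_qPoch_mul_qPoch q (n := k + 1 + t) (k := k + 1) (by omega)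
    rw [show k + 1 + t - k = t + 1 by omega, qPoch_succ] at h₁
    rw [show k + 1 + t - (k + 1) = t by omega, qPoch_succ] at h₂
    rw [show k + 1 + t - k = t + 1 by omega]
    have hQ : qPoch q q k * qPoch q q t ≠ 0 :=
      (mul_pos (qPoch_self_pos hq0 hq1 k) (qPoch_self_pos hq0 hq1 t)).ne'
    refine mul_right_cancel₀ hQ ?_
    linear_combination h₂ - h₁
  · rcases hk.eq_or_lt with rfl | hk
    · simp [gaussBinom_eq_zero_of_lt q n.lt_add_one]
    · simp [gaussBinom_eq_zero_of_lt q hk, gaussBinom_eq_zero_of_lt q (hk.trans k.lt_succ_self)]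

lemma gaussBinom_succ_left_mul (hq0 : 0 < q) (hq1 : q < 1) (n k : ℕ) :
    gaussBinom q (n + 1) k * (1 - q ^ (n + 1 - k)) = gaussBinom q n k * (1 - q ^ (n + 1)) := by
  rcases le_or_gt k n with hk | hk
  · obtain ⟨t, rfl⟩ : ∃ t, n = k + t := ⟨n - k, by omega⟩
    have h₁ := gaussBinom_mul_qPoch_mul_qPoch q (n := k + t + 1) (k := k) (by omega)
    have h₂ := gaussBinom_mul_qPoch_mul_qPoch q (n := k + t) (k := k) (by omega)
    rw [show k + t + 1 - k = t + 1 by omega, qPoch_succ] at h₁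
    rw [show k + t - k = t by omega] at h₂
    rw [show k + t + 1 - k = t + 1 by omega]
    have hQ : qPoch q q k * qPoch q q t ≠ 0 :=
      (mul_pos (qPoch_self_pos hq0 hq1 k) (qPoch_self_pos hq0 hq1 t)).ne'
    refine mul_right_cancel₀ hQ ?_
    linear_combination h₁ - (1 - q ^ (k + t + 1)) * h₂ + qPoch_succ q q (k + t)
  · rcases (Nat.succ_le_of_lt hk).eq_or_lt with rfl | hk'
    · simp [gaussBinom_eq_zero_of_lt q n.lt_add_one]
    · simp [gaussBinom_eq_zero_of_lt q hk, gaussBinom_eq_zero_of_lt q hk']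

end gaussBinom

lemma Nat.choose_two_succ (t : ℕ) : (t + 1).choose 2 = t.choose 2 + t := by
  rw [Nat.choose_succ_succ', Nat.choose_one_right, add_comm]

variable {q c d x : ℝ}

lemma qPoch_zpow_neg_mul (hq0 : 0 < q) (hq1 : q < 1) {n k : ℕ} (hk : k ≤ n) :
    q ^ n.choose 2 * qPoch q (q ^ (-(n : ℤ))) k * (-q) ^ k
      = q ^ (n - k).choose 2 * gaussBinom q n k * qPoch q q k := by
  induction k with
  | zero => simp [qPoch_zero]
  | succ k ih =>
    obtain ⟨t, rfl⟩ : ∃ t, n = k + 1 + t := ⟨n - (k + 1), by omega⟩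
    have ih := ih (by omega)
    rw [show k + 1 + t - k = t + 1 by omega, Nat.choose_two_succ] at ih
    rw [show k + 1 + t - (k + 1) = t by omega, qPoch_succ, qPoch_succ, pow_succ]
    have hu : q ^ (-((k + 1 + t : ℕ) : ℤ)) * q ^ (k + 1 + t) = 1 := by
      rw [zpow_neg, zpow_natCast, inv_mul_cancel₀ (pow_ne_zero _ hq0.ne')]
    have habs := gaussBinom_succ_right_mul hq0 hq1 (k + 1 + t) k
    rw [show k + 1 + t - k = t + 1 by omega] at habs
    linear_combination (-q) * (1 - q ^ (-((k + 1 + t : ℕ) : ℤ)) * q ^ k) * ih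
      - q ^ t.choose 2 * qPoch q q k * habs
      + q ^ t.choose 2 * gaussBinom q (k + 1 + t) k * qPoch q q k * hu

noncomputable def newtonProd (q c x : ℝ) (k : ℕ) : ℝ := ∏ j ∈ range k, (x - c * q ^ j)

lemma mul_newtonProd (q c x : ℝ) (k : ℕ) :
    x * newtonProd q c x k = newtonProd q c x (k + 1) + c * q ^ k * newtonProd q c x k := by
  rw [newtonProd, newtonProd, prod_range_succ]
  ring

lemma qPoch_div_mul_pow (hx : x ≠ 0) (k : ℕ) :
    qPoch q (c / x) k * x ^ k = newtonProd q c x k := by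
  induction k with
  | zero => simp [qPoch_zero, newtonProd]
  | succ k ih =>
    rw [qPoch_succ, newtonProd, prod_range_succ, ← newtonProd, ← ih, pow_succ]
    field_simp

noncomputable def bigqCoeff (q d : ℝ) (n k : ℕ) : ℝ :=
  q ^ (n - k).choose 2 * d ^ (n - k) * gaussBinom q n k

lemma bigqCoeff_eq_zero_of_lt {n k : ℕ} (h : n < k) : bigqCoeff q d n k = 0 := by
  rw [bigqCoeff, gaussBinom_eq_zero_of_lt q h, mul_zero]

lemma bigqCoeff_succ_zero (n : ℕ) : bigqCoeff q d (n + 1) 0 = q ^ n * d * bigqCoeff q d n 0 := by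
  simp only [bigqCoeff, Nat.sub_zero, Nat.choose_two_succ, gaussBinom_zero_right]
  ring

lemma bigqCoeff_succ_succ (n k : ℕ) :
    bigqCoeff q d (n + 1) (k + 1) = bigqCoeff q d n k + q ^ n * d * bigqCoeff q d n (k + 1) := by
  rcases lt_or_ge k n with hk | hk
  · obtain ⟨t, rfl⟩ : ∃ t, n = k + 1 + t := ⟨n - (k + 1), by omega⟩
    simp only [bigqCoeff, gaussBinom_succ_succ, show k + 1 + t + 1 - (k + 1) = t + 1 by omega,
      show k + 1 + t - k = t + 1 by omega, show k + 1 + t - (k + 1) = t by omega,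
      Nat.choose_two_succ]
    ring
  · rw [bigqCoeff, bigqCoeff, bigqCoeff_eq_zero_of_lt (by omega), gaussBinom_succ_succ,
      gaussBinom_eq_zero_of_lt q (by omega : n < k + 1), Nat.add_sub_add_right]
    ring

lemma pow_sub_pow_mul_bigqCoeff (hq0 : 0 < q) (hq1 : q < 1) (n k : ℕ) :
    (q ^ k - q ^ (n + 1)) * bigqCoeff q d (n + 1) k
      = q ^ n * d * (1 - q ^ (n + 1)) * bigqCoeff q d n k := by
  rcases le_or_gt k n with hk | hk
  · obtain ⟨t, rfl⟩ : ∃ t, n = k + t := ⟨n - k, by omega⟩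
    have habs := gaussBinom_succ_left_mul hq0 hq1 (k + t) k
    rw [show k + t + 1 - k = t + 1 by omega] at habs
    simp only [bigqCoeff, show k + t + 1 - k = t + 1 by omega, show k + t - k = t by omega,
      Nat.choose_two_succ]
    linear_combination q ^ k * q ^ t.choose 2 * q ^ t * d ^ (t + 1) * habs
  · rcases (Nat.succ_le_of_lt hk).eq_or_lt with rfl | hk'
    · rw [sub_self, zero_mul, bigqCoeff_eq_zero_of_lt hk, mul_zero]
    · rw [bigqCoeff_eq_zero_of_lt hk', bigqCoeff_eq_zero_of_lt hk, mul_zero, mul_zero]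

lemma PhatSeries_term_eq (hq0 : 0 < q) (hq1 : q < 1) (hd : d ≠ 0) (hx : x ≠ 0) {n k : ℕ}
    (hk : k ≤ n) :
    d ^ n * q ^ (n * (n - 1) / 2) *
        (qPoch q (q ^ (-(n : ℤ))) k * qPoch q (c / x) k / qPoch q q k * (-(q * x / d)) ^ k)
      = bigqCoeff q d n k * newtonProd q c x k := by
  have hneg := qPoch_zpow_neg_mul hq0 hq1 hk
  have hQ := (qPoch_self_pos hq0 hq1 k).ne'
  rw [← Nat.choose_two_right, bigqCoeff, ← qPoch_div_mul_pow hx, ← pow_sub_mul_pow d hk,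
    show -(q * x / d) = (-q) * x / d by ring, div_pow, mul_pow]
  generalize qPoch q (c / x) k = C
  field_simp
  linear_combination C * hneg

lemma PhatSeries_eq_sum (hq0 : 0 < q) (hq1 : q < 1) (hd : d ≠ 0) (hx : x ≠ 0) {n N : ℕ}
    (hN : n + 1 ≤ N) :
    PhatSeries q c d n x = ∑ k ∈ range N, bigqCoeff q d n k * newtonProd q c x k := by
  rw [PhatSeries, mul_sum]
  calc _ = ∑ k ∈ range (n + 1), bigqCoeff q d n k * newtonProd q c x k :=
        sum_congr rfl fun k hk =>
          PhatSeries_term_eq hq0 hq1 hd hx (Nat.lt_succ_iff.mp (mem_range.mp hk))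
    _ = _ := sum_subset (range_subset_range.2 hN) fun k _ hk => by
        rw [bigqCoeff_eq_zero_of_lt (by simpa using hk), zero_mul]

lemma sum_bigqCoeff_succ_mul_newtonProd (n N : ℕ) :
    ∑ k ∈ range (N + 1), bigqCoeff q d (n + 1) k * newtonProd q c x k
      = ∑ k ∈ range N, bigqCoeff q d n k * newtonProd q c x (k + 1)
        + q ^ n * d * ∑ k ∈ range (N + 1), bigqCoeff q d n k * newtonProd q c x k := by
  simp only [sum_range_succ' _ N, bigqCoeff_succ_succ, bigqCoeff_succ_zero, add_mul, mul_add,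
    sum_add_distrib, mul_sum, mul_assoc]
  ring

lemma sum_pow_mul_bigqCoeff_succ_mul_newtonProd (hq0 : 0 < q) (hq1 : q < 1) (n N : ℕ) :
    ∑ k ∈ range N, q ^ k * bigqCoeff q d (n + 1) k * newtonProd q c x k
      = q ^ (n + 1) * ∑ k ∈ range N, bigqCoeff q d (n + 1) k * newtonProd q c x k
        + q ^ n * d * (1 - q ^ (n + 1)) *
            ∑ k ∈ range N, bigqCoeff q d n k * newtonProd q c x k := by
  rw [mul_sum, mul_sum, ← sum_add_distrib]
  refine sum_congr rfl fun k _ => ?_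
  linear_combination newtonProd q c x k * pow_sub_pow_mul_bigqCoeff (d := d) hq0 hq1 n k

lemma mul_sum_bigqCoeff_mul_newtonProd (n N : ℕ) :
    x * ∑ k ∈ range N, bigqCoeff q d n k * newtonProd q c x k
      = ∑ k ∈ range N, bigqCoeff q d n k * newtonProd q c x (k + 1)
        + c * ∑ k ∈ range N, q ^ k * bigqCoeff q d n k * newtonProd q c x k := by
  rw [mul_sum, mul_sum, ← sum_add_distrib]
  refine sum_congr rfl fun k _ => ?_
  linear_combination bigqCoeff q d n k * mul_newtonProd q c x k

lemma mul_PhatSeries (hq0 : 0 < q) (hq1 : q < 1) (hd : d ≠ 0) (hx : x ≠ 0) (n : ℕ) :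
    x * PhatSeries q c d n x = PhatSeries q c d (n + 1) x - q ^ n * d * PhatSeries q c d n x
      + c * ∑ k ∈ range (n + 1), q ^ k * bigqCoeff q d n k * newtonProd q c x k := by
  have hshift := sum_bigqCoeff_succ_mul_newtonProd (q := q) (c := c) (d := d) (x := x) n (n + 1)
  rw [← PhatSeries_eq_sum hq0 hq1 hd hx le_rfl, ← PhatSeries_eq_sum hq0 hq1 hd hx (by omega)]
    at hshift
  rw [PhatSeries_eq_sum hq0 hq1 hd hx (N := n + 1) le_rfl, mul_sum_bigqCoeff_mul_newtonProd,
    hshift, ← PhatSeries_eq_sum hq0 hq1 hd hx (N := n + 1) le_rfl]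
  ring

lemma PhatSeries_zero (q c d x : ℝ) : PhatSeries q c d 0 x = 1 := by
  simp [PhatSeries, qPoch_zero]

lemma PhatSeries_succ_recurrence (hq0 : 0 < q) (hq1 : q < 1) (hd : d ≠ 0) (hx : x ≠ 0)
    (m : ℕ) :
    x * PhatSeries q c d (m + 1) x
      = PhatSeries q c d (m + 2) x + q ^ (m + 1) * (c - d) * PhatSeries q c d (m + 1) x
        + q ^ m * c * d * (1 - q ^ (m + 1)) * PhatSeries q c d m x := by
  have hsum := sum_pow_mul_bigqCoeff_succ_mul_newtonProd (c := c) (d := d) (x := x) hq0 hq1 m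
    (m + 2)
  rw [← PhatSeries_eq_sum hq0 hq1 hd hx le_rfl, ← PhatSeries_eq_sum hq0 hq1 hd hx (by omega)]
    at hsum
  rw [mul_PhatSeries hq0 hq1 hd hx, hsum]
  ring

theorem bigqJacobi_three_term_recurrence_general (q c d : ℝ) (hq0 : 0 < q) (hq1 : q < 1)
    (hd : d ≠ 0) :
    (∀ x : ℝ, x ≠ 0 → PhatSeries q c d 0 x = 1) ∧
    (∀ x : ℝ, x ≠ 0 →
      x * PhatSeries q c d 0 x = PhatSeries q c d 1 x + (c - d) * PhatSeries q c d 0 x) ∧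
    (∀ n : ℕ, 1 ≤ n → ∀ x : ℝ, x ≠ 0 →
      x * PhatSeries q c d n x
        = PhatSeries q c d (n + 1) x + q ^ n * (c - d) * PhatSeries q c d n x
          + q ^ (n - 1) * c * d * (1 - q ^ n) * PhatSeries q c d (n - 1) x) := by
  refine ⟨fun x _ => PhatSeries_zero q c d x, fun x hx => ?_, fun n hn x hx => ?_⟩
  · rw [mul_PhatSeries hq0 hq1 hd hx 0]
    simp only [zero_add, pow_zero, one_mul, PhatSeries_zero, mul_one, range_one, bigqCoeff,
      zero_tsub, Nat.choose_zero_succ, newtonProd, sum_singleton, gaussBinom_self, range_zero,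
      prod_empty]
    ring
  · obtain ⟨m, rfl⟩ := Nat.exists_eq_add_of_le' hn
    simpa using PhatSeries_succ_recurrence hq0 hq1 hd hx m

/-- Three-term recurrence for the monic big q-Jacobi polynomials with `a = b = 0`. -/
theorem bigqJacobi_three_term_recurrence (q c d : ℝ) (hq0 : 0 < q) (hq1 : q < 1)
    (hc : c ≠ 0) (hd : d ≠ 0) :
    (∀ x : ℝ, x ≠ 0 → PhatSeries q c d 0 x = 1) ∧
    (∀ x : ℝ, x ≠ 0 →
      x * PhatSeries q c d 0 x = PhatSeries q c d 1 x + (c - d) * PhatSeries q c d 0 x) ∧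
    (∀ n : ℕ, 1 ≤ n → ∀ x : ℝ, x ≠ 0 →
      x * PhatSeries q c d n x
        = PhatSeries q c d (n + 1) x + q ^ n * (c - d) * PhatSeries q c d n x
          + q ^ (n - 1) * c * d * (1 - q ^ n) * PhatSeries q c d (n - 1) x) :=
  bigqJacobi_three_term_recurrence_general q c d hq0 hq1 hd
end

section
/- Limit of big q-Jacobi polynomials to Jacobi polynomials of shifted argument: for real α,β > -1, c,d>0, a nonnegative integer n and real x, lim_{q↑1} P_n(x; q^α, q^β, c, d; q) = R_n^{(α,β)}((2x+d-c)/(c+d)). -/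
/-!
Both sides are finite sums over `k ≤ n`, so it suffices to take the limit term by term. Each
q-shifted factorial `(q^t; q)_k` divided by `(1 - q)^k` tends to the Pochhammer symbol `(t)_k`,
because `(1 - q^s) / (1 - q) → s` is the derivative of `q ↦ q^s` at `1`; the k-th term has three
such factors above and three below the fraction bar, so the powers of `1 - q` cancel. The two
remaining factors `(q^{1+α} x/c; q)_k` and `(-q^{1+α} d/c; q)_k` are continuous at `q = 1`, with
values `(1 - x/c)^k` and `(1 + d/c)^k`, and `(1 - x/c) / (1 + d/c) = (1 - y)/2` for
`y = (2x + d - c)/(c + d)`.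
-/

open Filter

/-- big q-Jacobi polynomial `P_n(x; q^α, q^β, c, d; q)
= ₃φ₂(q^{-n}, q^{n+1+α+β}, q^{1+α}x/c; q^{1+α}, -q^{1+α}d/c; q, q)`. -/
noncomputable def bigqJacobiP (q α β c d : ℝ) (n : ℕ) (x : ℝ) : ℝ :=
  ∑ k ∈ Finset.range (n + 1),
    qPoch q (q ^ (-(n : ℤ))) k * qPoch q (q ^ (α + β) * q ^ (n + 1)) k
        * qPoch q (q * q ^ α * x / c) k
      / (qPoch q (q * q ^ α) k * qPoch q (-(q * q ^ α * d / c)) k * qPoch q q k) * q ^ k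

/-- Jacobi polynomial `R_n^{(α,β)}(y) = ₂F₁(-n, n+α+β+1; α+1; (1-y)/2)`,
normalized so that `R_n^{(α,β)}(1) = 1`. -/
noncomputable def jacobiR (n : ℕ) (α β : ℝ) (y : ℝ) : ℝ :=
  ∑ k ∈ Finset.range (n + 1),
    (∏ j ∈ Finset.range k, (-(n : ℝ) + j)) * (∏ j ∈ Finset.range k, ((n : ℝ) + α + β + 1 + j))
      / ((∏ j ∈ Finset.range k, (α + 1 + j)) * (Nat.factorial k)) * ((1 - y) / 2) ^ k

open Finset Topology

lemma tendsto_one_sub_rpow_div_one_sub (s : ℝ) :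
    Tendsto (fun q : ℝ => (1 - q ^ s) / (1 - q)) (𝓝[≠] 1) (𝓝 s) := by
  have h := (Real.hasDerivAt_rpow_const (x := 1) (p := s) (Or.inl one_ne_zero)).tendsto_slope
  rw [Real.one_rpow, mul_one] at h
  refine h.congr fun q => ?_
  rw [slope_def_field, Real.one_rpow, ← neg_sub (q ^ s), ← neg_sub q, neg_div_neg_eq]

lemma tendsto_qPoch_rpow_div_one_sub_pow (t : ℝ) (k : ℕ) :
    Tendsto (fun q : ℝ => qPoch q (q ^ t) k / (1 - q) ^ k) (𝓝[≠] 1)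
      (𝓝 (∏ j ∈ range k, (t + j))) := by
  refine (tendsto_finsetProd (range k) fun j _ =>
    tendsto_one_sub_rpow_div_one_sub (t + j)).congr' ?_
  filter_upwards [nhdsWithin_le_nhds (Ioi_mem_nhds one_pos)] with q hq
  rw [qPoch, prod_div_distrib, prod_const, card_range]
  refine congrArg (· / _) (prod_congr rfl fun j _ => ?_)
  rw [Real.rpow_add hq, Real.rpow_natCast]

lemma tendsto_qPoch_rpow_mul (t r : ℝ) (k : ℕ) :
    Tendsto (fun q : ℝ => qPoch q (q ^ t * r) k) (𝓝 1) (𝓝 ((1 - r) ^ k)) := by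
  have h : ContinuousAt (fun q : ℝ => qPoch q (q ^ t * r) k) 1 := by
    unfold qPoch
    fun_prop (disch := norm_num)
  simpa [qPoch] using h.tendsto

lemma tendsto_qHypergeometricTerm (a₁ a₂ b t u v : ℝ) (k : ℕ)
    (hb : ∏ j ∈ range k, (b + j) ≠ 0) (hv : v ≠ 1) :
    Tendsto (fun q : ℝ => qPoch q (q ^ a₁) k * qPoch q (q ^ a₂) k * qPoch q (q ^ t * u) k
        / (qPoch q (q ^ b) k * qPoch q (q ^ t * v) k * qPoch q q k) * q ^ k) (𝓝[≠] 1)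
      (𝓝 ((∏ j ∈ range k, (a₁ + j)) * (∏ j ∈ range k, (a₂ + j)) * (1 - u) ^ k
        / ((∏ j ∈ range k, (b + j)) * (1 - v) ^ k * k.factorial))) := by
  have hfact : (k.factorial : ℝ) = ∏ j ∈ range k, ((1 : ℝ) + j) := by
    rw [← prod_range_add_one_eq_factorial]
    push_cast
    exact prod_congr rfl fun j _ => add_comm _ _
  have hden : (∏ j ∈ range k, (b + j)) * (1 - v) ^ k * k.factorial ≠ 0 :=
    mul_ne_zero (mul_ne_zero hb (pow_ne_zero _ (sub_ne_zero.mpr hv.symm)))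
      (Nat.cast_ne_zero.mpr k.factorial_ne_zero)
  have hpow : Tendsto (fun q : ℝ => q ^ k) (𝓝[≠] 1) (𝓝 1) := by
    simpa using ((continuous_pow k).tendsto (1 : ℝ)).mono_left nhdsWithin_le_nhds
  have hlim := ((((tendsto_qPoch_rpow_div_one_sub_pow a₁ k).mul
      (tendsto_qPoch_rpow_div_one_sub_pow a₂ k)).mul
      ((tendsto_qPoch_rpow_mul t u k).mono_left nhdsWithin_le_nhds)).div
    (((tendsto_qPoch_rpow_div_one_sub_pow b k).mul
      ((tendsto_qPoch_rpow_mul t v k).mono_left nhdsWithin_le_nhds)).mul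
      (tendsto_qPoch_rpow_div_one_sub_pow 1 k)) (hfact ▸ hden)).mul hpow
  rw [mul_one, ← hfact] at hlim
  refine hlim.congr' ?_
  filter_upwards [self_mem_nhdsWithin] with q hq
  have hp : (1 - q) ^ k ≠ 0 := pow_ne_zero _ (sub_ne_zero.mpr (Ne.symm hq))
  simp only [Pi.div_apply, Real.rpow_one]
  congr 1
  generalize (1 - q) ^ k = p at hp
  rw [show ∀ A B C : ℝ, A / p * (B / p) * C = A * B * C / (p * p) by intros; ring,
    show ∀ D E F : ℝ, D / p * E * (F / p) = D * E * F / (p * p) by intros; ring,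
    div_div_div_cancel_right₀ (mul_ne_zero hp hp)]

theorem bigqJacobi_tendsto_jacobi_general (α β c d : ℝ) (hα : -1 < α)
    (hc : 0 < c) (hd : 0 < d) (n : ℕ) (x : ℝ) :
    Tendsto (fun q : ℝ => bigqJacobiP q α β c d n x)
      (nhdsWithin 1 (Set.Ioo 0 1)) (nhds (jacobiR n α β ((2 * x + d - c) / (c + d)))) := by
  have hv : -(d / c) ≠ 1 := by have := div_pos hd hc; linarith
  have hy : (1 - (2 * x + d - c) / (c + d)) / 2 = (1 - x / c) / (1 - -(d / c)) := by
    have : c + d ≠ 0 := by linarith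
    rw [div_eq_div_iff two_ne_zero (sub_ne_zero.mpr hv.symm)]
    field_simp
    ring
  refine tendsto_finsetSum _ fun k _ => ?_
  have hb : ∏ j ∈ range k, (α + 1 + j) ≠ 0 :=
    prod_ne_zero_iff.mpr fun j _ => by have : (0 : ℝ) ≤ j := j.cast_nonneg; linarith
  have hterm := (tendsto_qHypergeometricTerm (-n) (n + α + β + 1) (α + 1) (α + 1) (x / c)
    (-(d / c)) k hb hv).mono_left (nhdsWithin_mono _ fun q (hq : q ∈ Set.Ioo 0 1) => hq.2.ne)
  rw [hy, div_pow]
  convert hterm.congr' ?_ using 2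
  · ring
  filter_upwards [self_mem_nhdsWithin] with q hq
  have e₁ : q ^ (-(n : ℝ)) = q ^ (-(n : ℤ)) := by
    rw [← Real.rpow_intCast, Int.cast_neg, Int.cast_natCast]
  have e₂ : q ^ ((n : ℝ) + α + β + 1) = q ^ (α + β) * q ^ (n + 1) := by
    rw [← Real.rpow_natCast, ← Real.rpow_add hq.1]
    push_cast
    ring_nf
  have e₃ : q ^ (α + 1) = q * q ^ α := by rw [Real.rpow_add_one hq.1.ne', mul_comm]
  simp only [e₁, e₂, e₃, mul_neg, ← mul_div_assoc]

/-- As `q ↑ 1`, the big q-Jacobi polynomial `P_n(x;q^α,q^β,c,d;q)` tends to the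
normalized Jacobi polynomial of shifted argument `R_n^{(α,β)}((2x+d-c)/(c+d))`. -/
theorem bigqJacobi_tendsto_jacobi (α β c d : ℝ) (hα : -1 < α) (hβ : -1 < β)
    (hc : 0 < c) (hd : 0 < d) (n : ℕ) (x : ℝ) :
    Tendsto (fun q : ℝ => bigqJacobiP q α β c d n x)
      (nhdsWithin 1 (Set.Ioo 0 1)) (nhds (jacobiR n α β ((2 * x + d - c) / (c + d)))) :=
  bigqJacobi_tendsto_jacobi_general α β c d hα hc hd n x
end
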